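/- Let m be a positive integer with 2 dividing m but 4 not dividing m (2‖m). Let A, B ⊆ Z_m with A ∪ B = Z_m and |A ∩ B| = 4. Then R_A(n) = R_B(n) for all n ∈ Z_m if and only if B = A + m/2. -/

import Mathlib

/-!
Write `ε = 𝟙_A - 𝟙_B`, `I = A ∩ B` and `c = m / 2`. Since `A ∪ B` is everything,
`𝟙_A + 𝟙_B = 1 + 𝟙_I`, and `R_A - R_B = (𝟙_A + 𝟙_B) ∗ ε`; so `R_A = R_B` says
`∑ ε + ∑_{t ∈ I} ε(n - t) = 0` for all `n`, and summing over `n` shows `∑ ε = 0`.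
Modulo 2, `ε` is the indicator of the complement of `I`, so `R_I(n) ≡ |I|` is even for every `n`.
The solutions of `t + t = 2 t₀` are `t₀` and `t₀ + c`, and the other representations of `2 t₀` come
in pairs, so `I` is stable under `+ c`: `I = {a, a + c, b, b + c}`. Then `g(x) = ε(x) + ε(x + c)`
is `c`-periodic and `(a - b)`-antiperiodic. As `m / 2` is odd, `(m / 2) • (a - b)` is both a
period and an antiperiod of `g`, so `g = 0`, i.e. `ε(x + c) = -ε(x)`, which says `B = A + c`.
Conversely, translating by `c` shifts `R_A` by `2c = 0`.
-/

open Finset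

/-- Representation function: number of ordered pairs (a, a') in A × A with a + a' = n. -/
def repFn {m : ℕ} (A : Finset (ZMod m)) (n : ZMod m) : ℕ :=
  ((A ×ˢ A).filter (fun p => p.1 + p.2 = n)).card

namespace ZMod

variable {m : ℕ}

theorem natCast_div_two_add_self (h2 : 2 ∣ m) :
    ((m / 2 : ℕ) : ZMod m) + ((m / 2 : ℕ) : ZMod m) = 0 := by
  rw [← Nat.cast_add, ← two_mul, Nat.mul_div_cancel' h2, natCast_self]

theorem natCast_div_two_ne_zero [NeZero m] (h2 : 2 ∣ m) : ((m / 2 : ℕ) : ZMod m) ≠ 0 := by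
  have hm := NeZero.pos m
  rw [Ne, natCast_eq_zero_iff]
  intro h
  have := Nat.le_of_dvd (Nat.div_pos (Nat.le_of_dvd hm h2) two_pos) h
  omega

theorem eq_zero_or_eq_natCast_div_two_of_add_self_eq_zero [NeZero m] (h2 : 2 ∣ m)
    {x : ZMod m} (hx : x + x = 0) : x = 0 ∨ x = ((m / 2 : ℕ) : ZMod m) := by
  have hval : m ∣ x.val + x.val := by
    rw [← natCast_eq_zero_iff, Nat.cast_add, natCast_zmod_val, hx]
  have hlt := x.val_lt
  obtain ⟨k, hk⟩ := hval
  have hk2 : k < 2 := by nlinarith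
  rw [← natCast_zmod_val x]
  interval_cases k
  · left; simp [show x.val = 0 by omega]
  · right; congr 1; omega

theorem eq_zero_of_periodic_of_antiperiodic [NeZero m] (h2 : 2 ∣ m) (hodd : Odd (m / 2))
    {g : ZMod m → ℤ} {d : ZMod m} (hc : Function.Periodic g ((m / 2 : ℕ) : ZMod m))
    (hd : Function.Antiperiodic g d) : g = 0 := by
  -- `(m / 2) • d` has order at most 2, so it is a period of `g`, as well as an antiperiod.
  have hdd : (m / 2) • d + (m / 2) • d = 0 := by
    rw [← add_nsmul, ← two_mul, Nat.mul_div_cancel' h2, nsmul_eq_mul, natCast_self, zero_mul]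
  have hper : Function.Periodic g ((m / 2) • d) := by
    rcases eq_zero_or_eq_natCast_div_two_of_add_self_eq_zero h2 hdd with h | h <;> rw [h]
    exacts [fun x => by rw [add_zero], hc]
  obtain ⟨k, hk⟩ := hodd
  have hanti : Function.Antiperiodic g ((m / 2) • d) := hk ▸ hd.odd_nsmul_antiperiodic k
  funext x
  have := (hper x).symm.trans (hanti x)
  simp only [Pi.zero_apply]
  omega

end ZMod

section AddCommGroup

variable {G M : Type*} [AddCommGroup G] [AddCommMonoid M]

theorem sum_comp_sub_left [Fintype G] (f : G → M) (n : G) : ∑ x, f (n - x) = ∑ x, f x :=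
  (Equiv.subLeft n).sum_comp f

theorem sum_comp_sub_right [Fintype G] (f : G → M) (t : G) : ∑ x, f (x - t) = ∑ x, f x :=
  (Equiv.subRight t).sum_comp f

variable [DecidableEq G] {c : G}

theorem sum_pair_add_right (hc : c ≠ 0) (f : G → M) (a : G) :
    ∑ t ∈ {a, a + c}, f t = f a + f (a + c) :=
  sum_pair (by simpa [eq_comm] using hc)

theorem exists_sum_eq_of_card_eq_four (hc : c ≠ 0) (hcc : c + c = 0) {I : Finset G}
    (hI : #I = 4) (hcI : ∀ t ∈ I, t + c ∈ I) :
    ∃ a b, ∀ f : G → M, ∑ t ∈ I, f t = f a + f (a + c) + (f b + f (b + c)) := by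
  have hcard_pair (x : G) : #{x, x + c} = 2 := card_pair (by simpa [eq_comm] using hc)
  obtain ⟨a, ha⟩ := card_pos.mp (hI ▸ four_pos : 0 < #I)
  have hP : {a, a + c} ⊆ I := by simp [insert_subset_iff, ha, hcI a ha]
  have hJ : #(I \ {a, a + c}) = 2 := by rw [card_sdiff_of_subset hP, hI, hcard_pair]
  obtain ⟨b, hb⟩ := card_pos.mp (hJ ▸ two_pos : 0 < #(I \ {a, a + c}))
  have hbJ : {b, b + c} ⊆ I \ {a, a + c} := by
    simp only [mem_sdiff, mem_insert, mem_singleton, not_or] at hb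
    have hbc : b + c ≠ a := fun h => hb.2.2 (by rw [← h, add_assoc, hcc, add_zero])
    simp [insert_subset_iff, hb, hcI b hb.1, hbc]
  have hJeq := eq_of_subset_of_card_le hbJ (by rw [hJ, hcard_pair])
  refine ⟨a, b, fun f => ?_⟩
  rw [← sum_sdiff hP, ← hJeq, sum_pair_add_right hc, sum_pair_add_right hc, add_comm]

end AddCommGroup

variable {m : ℕ}

theorem repFn_eq_card_filter (A : Finset (ZMod m)) (n : ZMod m) :
    repFn A n = #{x ∈ A | n - x ∈ A} := by
  refine card_nbij' Prod.fst (fun x => (x, n - x)) ?_ ?_ ?_ ?_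
  · rintro ⟨x, y⟩ hxy
    simp only [mem_coe, mem_filter, mem_product] at hxy ⊢
    obtain ⟨⟨hx, hy⟩, rfl⟩ := hxy
    simpa using And.intro hx hy
  · intro x hx
    simp only [mem_coe, mem_filter, mem_product] at hx ⊢
    exact ⟨hx, add_sub_cancel x n⟩
  · rintro ⟨x, y⟩ hxy
    simp only [mem_coe, mem_filter, mem_product] at hxy
    simp [← hxy.2]
  · intro x _
    rfl

/-- Ordered representations `x + y = n` with `x ≠ y` come in pairs. -/
theorem repFn_cast_zmod_two (A : Finset (ZMod m)) (n : ZMod m) :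
    (repFn A n : ZMod 2) = #{x ∈ A | x + x = n} := by
  set s := {x ∈ A | n - x ∈ A}
  have hdiag : {x ∈ A | x + x = n} = {x ∈ s | x + x = n} := by
    ext x
    simp only [s, mem_filter]
    constructor
    · rintro ⟨hx, rfl⟩; exact ⟨⟨hx, by simpa using hx⟩, rfl⟩
    · rintro ⟨⟨hx, -⟩, h⟩; exact ⟨hx, h⟩
  have hpairs : ∑ x ∈ s, (if x + x = n then 0 else 1 : ZMod 2) = 0 := by
    refine sum_involution (fun x _ => n - x) ?_ ?_ ?_ ?_
    · intro x _
      have : n - x + (n - x) = n ↔ x + x = n := by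
        constructor <;> intro h <;> linear_combination -h
      simp only [this]
      split_ifs <;> decide
    · intro x _ hx hfix
      exact hx (if_pos (by linear_combination -hfix))
    · intro x hx
      simp only [s, mem_filter] at hx ⊢
      exact ⟨hx.2, by simpa using hx.1⟩
    · intro x _
      exact sub_sub_cancel n x
  rw [sum_ite, sum_const_zero, zero_add, sum_const, nsmul_one] at hpairs
  rw [repFn_eq_card_filter, hdiag, ← card_filter_add_card_filter_not (fun x => x + x = n),
    Nat.cast_add, hpairs, add_zero]

theorem repFn_image_add_right (A : Finset (ZMod m)) (c n : ZMod m) :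
    repFn (A.image (· + c)) n = repFn A (n - (c + c)) := by
  refine card_nbij' (fun p => (p.1 - c, p.2 - c)) (fun p => (p.1 + c, p.2 + c)) ?_ ?_ ?_ ?_
  · rintro ⟨x, y⟩ h
    simp only [mem_coe, mem_filter, mem_product, mem_image] at h ⊢
    obtain ⟨⟨⟨x, hx, rfl⟩, ⟨y, hy, rfl⟩⟩, rfl⟩ := h
    refine ⟨⟨by simpa using hx, by simpa using hy⟩, by ring⟩
  · rintro ⟨x, y⟩ h
    simp only [mem_coe, mem_filter, mem_product, mem_image] at h ⊢
    exact ⟨⟨⟨x, h.1.1, rfl⟩, ⟨y, h.1.2, rfl⟩⟩, by linear_combination h.2⟩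
  · intro p _; simp
  · intro p _; simp

def signedIndicator {α : Type*} [DecidableEq α] (A B : Finset α) (x : α) : ℤ :=
  (if x ∈ A then 1 else 0) - if x ∈ B then 1 else 0

section Cover

variable {α : Type*} [DecidableEq α] [Fintype α] {A B : Finset α}

theorem signedIndicator_cast_zmod_two (hU : A ∪ B = univ) (x : α) :
    (signedIndicator A B x : ZMod 2) = if x ∈ A ∩ B then 0 else 1 := by
  have hx : x ∈ A ∪ B := hU ▸ mem_univ x
  rw [mem_union] at hx
  by_cases hA : x ∈ A <;> by_cases hB : x ∈ B <;> simp_all [signedIndicator]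

theorem signedIndicator_nonneg_iff (hU : A ∪ B = univ) (x : α) :
    0 ≤ signedIndicator A B x ↔ x ∈ A := by
  have hx : x ∈ A ∪ B := hU ▸ mem_univ x
  rw [mem_union] at hx
  by_cases hA : x ∈ A <;> by_cases hB : x ∈ B <;> simp_all [signedIndicator]

theorem signedIndicator_nonpos_iff (hU : A ∪ B = univ) (x : α) :
    signedIndicator A B x ≤ 0 ↔ x ∈ B := by
  have hx : x ∈ A ∪ B := hU ▸ mem_univ x
  rw [mem_union] at hx
  by_cases hA : x ∈ A <;> by_cases hB : x ∈ B <;> simp_all [signedIndicator]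

end Cover

variable [NeZero m]

theorem repFn_eq_sum (A : Finset (ZMod m)) (n : ZMod m) :
    (repFn A n : ℤ) = ∑ x, (if x ∈ A then 1 else 0) * if n - x ∈ A then 1 else 0 := by
  simp only [repFn_eq_card_filter, card_filter, Nat.cast_sum, Nat.cast_ite, Nat.cast_one,
    Nat.cast_zero, ite_mul, one_mul, zero_mul, sum_ite_mem, univ_inter]

/-- `R_A - R_B = (𝟙_A + 𝟙_B) * (𝟙_A - 𝟙_B)` as a convolution; the cross terms cancel. -/
theorem repFn_sub_repFn (A B : Finset (ZMod m)) (n : ZMod m) :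
    (repFn A n : ℤ) - repFn B n =
      ∑ x, ((if x ∈ A then 1 else 0) + if x ∈ B then 1 else 0) * signedIndicator A B (n - x) := by
  have hcross : ∑ x : ZMod m, (if x ∈ B then (1 : ℤ) else 0) * (if n - x ∈ A then 1 else 0) =
      ∑ x : ZMod m, (if x ∈ A then 1 else 0) * (if n - x ∈ B then 1 else 0) := by
    rw [← sum_comp_sub_left _ n]
    simp only [sub_sub_cancel, mul_comm]
  rw [repFn_eq_sum, repFn_eq_sum]
  simp only [signedIndicator, add_mul, mul_sub, sum_add_distrib, sum_sub_distrib, hcross]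
  ring

theorem repFn_sub_repFn_of_union_eq_univ {A B : Finset (ZMod m)} (hU : A ∪ B = univ)
    (n : ZMod m) :
    (repFn A n : ℤ) - repFn B n =
      ∑ x, signedIndicator A B x + ∑ t ∈ A ∩ B, signedIndicator A B (n - t) := by
  have hcover (x : ZMod m) :
      ((if x ∈ A then 1 else 0) + if x ∈ B then 1 else 0 : ℤ) = 1 + if x ∈ A ∩ B then 1 else 0 := by
    have hx : x ∈ A ∪ B := hU ▸ mem_univ x
    rw [mem_union] at hx
    by_cases hA : x ∈ A <;> by_cases hB : x ∈ B <;> simp_all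
  simp only [repFn_sub_repFn, hcover, add_mul, one_mul, ite_mul, zero_mul, sum_add_distrib,
    sum_ite_mem, univ_inter, sum_comp_sub_left (signedIndicator A B) n]

theorem sum_signedIndicator_sub_eq_zero {A B : Finset (ZMod m)} (hU : A ∪ B = univ)
    (h : ∀ n, repFn A n = repFn B n) (n : ZMod m) :
    ∑ t ∈ A ∩ B, signedIndicator A B (n - t) = 0 := by
  obtain ⟨S, hSdef⟩ : ∃ S, ∑ x, signedIndicator A B x = S := ⟨_, rfl⟩
  have hn (n : ZMod m) : S + ∑ t ∈ A ∩ B, signedIndicator A B (n - t) = 0 := by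
    rw [← hSdef, ← repFn_sub_repFn_of_union_eq_univ hU, h, sub_self]
  have hS : ((m + #(A ∩ B) : ℕ) : ℤ) * S = 0 := by
    calc ((m + #(A ∩ B) : ℕ) : ℤ) * S
        = ∑ n : ZMod m, (S + ∑ t ∈ A ∩ B, signedIndicator A B (n - t)) := by
          rw [sum_add_distrib, sum_comm]
          simp only [sum_comp_sub_right, hSdef, sum_const, card_univ, ZMod.card, nsmul_eq_mul]
          push_cast
          ring
      _ = 0 := sum_eq_zero fun n _ => hn n
  have hS0 : S = 0 := by
    refine (mul_eq_zero.mp hS).resolve_left ?_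
    have := NeZero.pos m
    positivity
  simpa [hS0] using hn n

/-- Reduce `sum_signedIndicator_sub_eq_zero` mod 2: `𝟙_A - 𝟙_B` is odd exactly off `A ∩ B`. -/
theorem repFn_inter_cast_zmod_two {A B : Finset (ZMod m)} (hU : A ∪ B = univ)
    (h : ∀ n, repFn A n = repFn B n) (n : ZMod m) :
    (repFn (A ∩ B) n : ZMod 2) = #(A ∩ B) := by
  have hsum := congrArg (Int.cast : ℤ → ZMod 2) (sum_signedIndicator_sub_eq_zero hU h n)
  simp only [Int.cast_sum, signedIndicator_cast_zmod_two hU, sum_ite, sum_const_zero, zero_add,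
    sum_const, nsmul_one, Int.cast_zero] at hsum
  rw [← card_filter_add_card_filter_not (s := A ∩ B) (fun t => n - t ∈ A ∩ B), Nat.cast_add, hsum,
    add_zero, repFn_eq_card_filter]

theorem add_natCast_div_two_mem_inter (h2 : 2 ∣ m) {A B : Finset (ZMod m)}
    (hU : A ∪ B = univ) (hI : Even #(A ∩ B)) (h : ∀ n, repFn A n = repFn B n)
    {t : ZMod m} (ht : t ∈ A ∩ B) : t + ((m / 2 : ℕ) : ZMod m) ∈ A ∩ B := by
  by_contra hc
  have hdiag : {x ∈ A ∩ B | x + x = t + t} = {t} := by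
    refine eq_singleton_iff_unique_mem.mpr ⟨mem_filter.mpr ⟨ht, rfl⟩, fun x hx => ?_⟩
    rw [mem_filter] at hx
    rcases ZMod.eq_zero_or_eq_natCast_div_two_of_add_self_eq_zero h2
      (show (x - t) + (x - t) = 0 by linear_combination hx.2) with hxt | hxt
    · exact sub_eq_zero.mp hxt
    · rw [sub_eq_iff_eq_add'.mp hxt] at hx
      exact absurd hx.1 hc
  have := (repFn_cast_zmod_two (A ∩ B) (t + t)).symm.trans (repFn_inter_cast_zmod_two hU h _)
  rw [hdiag, card_singleton, Nat.cast_one, ZMod.natCast_eq_zero_iff_even.mpr hI] at this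
  exact one_ne_zero this

theorem signedIndicator_antiperiodic (h2 : 2 ∣ m) (hodd : Odd (m / 2)) {A B : Finset (ZMod m)}
    (hU : A ∪ B = univ) (hI : #(A ∩ B) = 4) (h : ∀ n, repFn A n = repFn B n) :
    Function.Antiperiodic (signedIndicator A B) ((m / 2 : ℕ) : ZMod m) := by
  set c : ZMod m := ((m / 2 : ℕ) : ZMod m)
  have hcc : c + c = 0 := ZMod.natCast_div_two_add_self h2
  obtain ⟨a, b, hsum⟩ := exists_sum_eq_of_card_eq_four (M := ℤ)
    (ZMod.natCast_div_two_ne_zero h2) hcc hI fun t ht => add_natCast_div_two_mem_inter h2 hU (hI ▸ even_two_mul 2) h ht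
  set g := fun x => signedIndicator A B x + signedIndicator A B (x + c)
  have hper : Function.Periodic g c := fun x => by
    simp only [g]
    rw [add_assoc, hcc, add_zero, add_comm]
  have hanti : Function.Antiperiodic g (a - b) := fun x => by
    have h0 := sum_signedIndicator_sub_eq_zero hU h (x + a)
    rw [hsum, show x + a - a = x by ring, show x + a - (a + c) = x + c by linear_combination -hcc,
      show x + a - b = x + (a - b) by ring,
      show x + a - (b + c) = x + (a - b) + c by linear_combination -hcc] at h0
    simp only [g]
    linarith
  intro x
  have := congrFun (ZMod.eq_zero_of_periodic_of_antiperiodic h2 hodd hper hanti) x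
  simp only [g, Pi.zero_apply] at this
  linarith

theorem stmt8 (m : ℕ) [NeZero m] (h2 : 2 ∣ m) (h4 : ¬ 4 ∣ m)
    (A B : Finset (ZMod m)) (hU : A ∪ B = Finset.univ) (hI : (A ∩ B).card = 4) :
    (∀ n : ZMod m, repFn A n = repFn B n) ↔
      B = A.image (fun x => x + ((m / 2 : ℕ) : ZMod m)) := by
  have hcc := ZMod.natCast_div_two_add_self h2
  constructor
  · intro h
    have hε := signedIndicator_antiperiodic h2 (Nat.odd_iff.mpr (by omega)) hU hI h
    ext x
    rw [image_add_right, mem_preimage, neg_eq_of_add_eq_zero_left hcc,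
      ← signedIndicator_nonpos_iff hU, ← signedIndicator_nonneg_iff hU, hε, neg_nonneg]
  · rintro rfl n
    rw [repFn_image_add_right, hcc, sub_zero]
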